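/- arXiv:2504.03517 — 2 statements merged into one kernel-verified Lean document; each statement's English description precedes it below -/
import Mathlib

section
/- Let L_X be the fragment of LTL(Prop) that forbids the operators G, F, U (so its formulas are built from atomic propositions, ¬, ∨, ∧, X). For every L_X-formula φ there exists an LTL_P(Prop)-formula φ_P such that for every actionless non-blocking Kripke structure K ∈ T(Prop): K ⊨ φ if and only if K ⊨ φ_P. -/
open scoped Classical

/-- Formulas of linear temporal logic `LTL(Prop)`:
`φ ::= p | ¬φ | φ∨φ | φ∧φ | Xφ | Fφ | Gφ | φUφ`. -/
inductive LTL (P : Type) : Type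
  | atom : P → LTL P
  | not : LTL P → LTL P
  | or : LTL P → LTL P → LTL P
  | and : LTL P → LTL P → LTL P
  | next : LTL P → LTL P
  | fut : LTL P → LTL P
  | glob : LTL P → LTL P
  | untl : LTL P → LTL P → LTL P

/-- Satisfaction of an `LTL` formula on an infinite word over `2^P`. -/
def satInf {P : Type} : LTL P → (ℕ → Set P) → Prop
  | .atom p, w => p ∈ w 0
  | .not φ, w => ¬ satInf φ w
  | .or φ ψ, w => satInf φ w ∨ satInf ψ w
  | .and φ ψ, w => satInf φ w ∧ satInf ψ w
  | .next φ, w => satInf φ (fun i => w (i + 1))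
  | .fut φ, w => ∃ j, satInf φ (fun i => w (i + j))
  | .glob φ, w => ∀ j, satInf φ (fun i => w (i + j))
  | .untl φ ψ, w => ∃ j, satInf ψ (fun i => w (i + j)) ∧ ∀ k < j, satInf φ (fun i => w (i + k))

/-- An actionless non-blocking Kripke structure of `T(Prop)`: a finite non-empty
set of states, initial states, a transition function with no blocking state, and
a labelling by propositions. -/
structure NBKripke (P : Type) where
  Q : Type
  [finQ : Fintype Q]
  neQ : Nonempty Q
  I : Set Q
  δ : Q → Set Q
  π : Q → Set P
  nonblocking : ∀ q, (δ q).Nonempty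

attribute [instance] NBKripke.finQ

/-- `K ⊨ φ`: every infinite path of `K` from every initial state satisfies `φ`
(via its infinite word of labels). -/
def KSat {P : Type} (K : NBKripke P) (φ : LTL P) : Prop :=
  ∀ q ∈ K.I, ∀ ρ : ℕ → K.Q, ρ 0 = q → (∀ i, ρ (i + 1) ∈ K.δ (ρ i)) →
    satInf φ (fun i => K.π (ρ i))

/-- Propositional formulas (the sort `φ_P` of `LTL_P(Prop)`):
`φ_P ::= p | ¬φ_P | φ_P∧φ_P | φ_P∨φ_P`. -/
inductive PropFm (P : Type) : Type
  | atom : P → PropFm P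
  | not : PropFm P → PropFm P
  | and : PropFm P → PropFm P → PropFm P
  | or : PropFm P → PropFm P → PropFm P

/-- Formulas of the logic `LTL_P(Prop)`:
`φ ::= φ_P | φ∧φ | φ_P∨φ | Xφ | Gφ | Fφ_P | φUφ_P`. -/
inductive LTLP (P : Type) : Type
  | ofProp : PropFm P → LTLP P
  | and : LTLP P → LTLP P → LTLP P
  | orP : PropFm P → LTLP P → LTLP P
  | next : LTLP P → LTLP P
  | glob : LTLP P → LTLP P
  | futP : PropFm P → LTLP P
  | untlP : LTLP P → PropFm P → LTLP P

/-- Reading a propositional formula as an `LTL` formula. -/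
def PropFm.toLTL {P : Type} : PropFm P → LTL P
  | .atom p => .atom p
  | .not φ => .not φ.toLTL
  | .and φ ψ => .and φ.toLTL ψ.toLTL
  | .or φ ψ => .or φ.toLTL ψ.toLTL

/-- Reading an `LTL_P(Prop)` formula as an `LTL(Prop)` formula. -/
def LTLP.toLTL {P : Type} : LTLP P → LTL P
  | .ofProp a => a.toLTL
  | .and φ ψ => .and φ.toLTL ψ.toLTL
  | .orP a φ => .or a.toLTL φ.toLTL
  | .next φ => .next φ.toLTL
  | .glob φ => .glob φ.toLTL
  | .futP a => .fut a.toLTL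
  | .untlP φ a => .untl φ.toLTL a.toLTL

/-- Membership in the fragment `L_X` of `LTL(Prop)`: the operators `G`, `F`, `U`
are forbidden. -/
def NoFGU {P : Type} : LTL P → Prop
  | .atom _ => True
  | .not φ => NoFGU φ
  | .or φ ψ => NoFGU φ ∧ NoFGU ψ
  | .and φ ψ => NoFGU φ ∧ NoFGU ψ
  | .next φ => NoFGU φ
  | .fut _ => False
  | .glob _ => False
  | .untl _ _ => False

/-! ### Auxiliary material -/

/-- The "lookahead depth" of an `LTL` formula. -/
def depth {P : Type} : LTL P → ℕ
  | .atom _ => 1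
  | .not φ => depth φ
  | .or φ ψ => max (depth φ) (depth ψ)
  | .and φ ψ => max (depth φ) (depth ψ)
  | .next φ => depth φ + 1
  | .fut φ => depth φ
  | .glob φ => depth φ
  | .untl φ ψ => max (depth φ) (depth ψ)

lemma depth_pos {P : Type} (φ : LTL P) : 0 < depth φ := by
  induction φ <;> simp [depth] <;> omega

/-- A `NoFGU` formula only depends on the first `depth φ` letters. -/
lemma satInf_depend {P : Type} (φ : LTL P) (hφ : NoFGU φ) :
    ∀ w w' : ℕ → Set P, (∀ k < depth φ, w k = w' k) →
      (satInf φ w ↔ satInf φ w') := by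
  induction φ with
  | atom p => intro w w' h; simp [satInf, h 0 (by simp [depth])]
  | not φ ih =>
      intro w w' h
      simp only [satInf]
      exact not_congr (ih hφ w w' h)
  | or φ ψ ihφ ihψ =>
      intro w w' h
      simp only [satInf]
      exact or_congr (ihφ hφ.1 w w' fun k hk => h k (by simp [depth]; omega))
        (ihψ hφ.2 w w' fun k hk => h k (by simp [depth]; omega))
  | and φ ψ ihφ ihψ =>
      intro w w' h
      simp only [satInf]
      exact and_congr (ihφ hφ.1 w w' fun k hk => h k (by simp [depth]; omega))
        (ihψ hφ.2 w w' fun k hk => h k (by simp [depth]; omega))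
  | next φ ih =>
      intro w w' h
      simp only [satInf]
      exact ih hφ _ _ fun k hk => h (k + 1) (by simp [depth]; omega)
  | fut _ _ => exact absurd hφ (by simp [NoFGU])
  | glob _ _ => exact absurd hφ (by simp [NoFGU])
  | untl _ _ _ _ => exact absurd hφ (by simp [NoFGU])

/-- A tautological propositional formula. -/
def trueFm {P : Type} (p0 : P) : PropFm P := .or (.atom p0) (.not (.atom p0))

lemma satInf_trueFm {P : Type} (p0 : P) (w : ℕ → Set P) :
    satInf (trueFm p0).toLTL w := by
  simp only [trueFm, PropFm.toLTL, satInf]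
  exact em _

/-- Finite conjunction of propositional formulas. -/
def conjP {P : Type} (t : PropFm P) : List (PropFm P) → PropFm P
  | [] => t
  | x :: l => .and x (conjP t l)

lemma satInf_conjP {P : Type} (p0 : P) (l : List (PropFm P)) (w : ℕ → Set P) :
    satInf (conjP (trueFm p0) l).toLTL w ↔ ∀ x ∈ l, satInf x.toLTL w := by
  induction l with
  | nil => simpa [conjP] using satInf_trueFm p0 w
  | cons x l ih => simp [conjP, PropFm.toLTL, satInf, ih]

open scoped Classical in
/-- The characteristic propositional formula of a letter `S ⊆ P`. -/
noncomputable def charFm {P : Type} [Fintype P] (p0 : P) (S : Set P) : PropFm P :=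
  conjP (trueFm p0)
    ((Finset.univ : Finset P).toList.map fun p =>
      if p ∈ S then .atom p else .not (.atom p))

lemma satInf_charFm {P : Type} [Fintype P] (p0 : P) (S : Set P) (w : ℕ → Set P) :
    satInf (charFm p0 S).toLTL w ↔ w 0 = S := by
  rw [charFm, satInf_conjP]
  constructor
  · intro h
    ext p
    have := h (if p ∈ S then .atom p else .not (.atom p))
      (List.mem_map.2 ⟨p, by simp, rfl⟩)
    by_cases hp : p ∈ S <;> simp [hp, PropFm.toLTL, satInf] at this ⊢ <;> tauto
  · intro hS x hx
    obtain ⟨p, -, rfl⟩ := List.mem_map.1 hx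
    by_cases hp : p ∈ S <;> simp [hp, PropFm.toLTL, satInf, hS]

/-- The `LTL_P` clause `g 0 ∨ X (g 1 ∨ X (… ∨ X (g m)))`. -/
def clauseF {P : Type} : (m : ℕ) → (Fin (m + 1) → PropFm P) → LTLP P
  | 0, g => .ofProp (g 0)
  | m + 1, g => .orP (g 0) (.next (clauseF m fun k => g k.succ))

lemma satInf_clauseF {P : Type} (m : ℕ) (g : Fin (m + 1) → PropFm P)
    (w : ℕ → Set P) :
    satInf (clauseF m g).toLTL w ↔
      ∃ k : Fin (m + 1), satInf ((g k).toLTL) (fun i => w (i + (k : ℕ))) := by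
  induction m generalizing w with
  | zero =>
      simp only [clauseF, LTLP.toLTL]
      constructor
      · intro h; exact ⟨0, by simpa using h⟩
      · rintro ⟨k, hk⟩
        have : k = 0 := Fin.eq_zero k
        subst this; simpa using hk
  | succ m ih =>
      simp only [clauseF, LTLP.toLTL, satInf, ih]
      constructor
      · rintro (h | ⟨k, hk⟩)
        · exact ⟨0, by simpa using h⟩
        · refine ⟨k.succ, ?_⟩
          have : (fun i => w (i + (k.succ : ℕ))) = fun i => w (i + (k : ℕ) + 1) := by
            rfl
          rw [this]; exact hk
      · rintro ⟨k, hk⟩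
        refine Fin.cases ?_ ?_ k hk
        · intro h; exact Or.inl (by simpa using h)
        · intro k h
          refine Or.inr ⟨k, ?_⟩
          have : (fun i => w (i + (k.succ : ℕ))) = fun i => w (i + (k : ℕ) + 1) := by
            rfl
          rw [this] at h; exact h

/-- Finite conjunction of `LTL_P` formulas. -/
def conjL {P : Type} (t : LTLP P) : List (LTLP P) → LTLP P
  | [] => t
  | x :: l => .and x (conjL t l)

lemma satInf_conjL {P : Type} (p0 : P) (l : List (LTLP P)) (w : ℕ → Set P) :
    satInf (conjL (.ofProp (trueFm p0)) l).toLTL w ↔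
      ∀ x ∈ l, satInf x.toLTL w := by
  induction l with
  | nil => simpa [conjL, LTLP.toLTL] using satInf_trueFm p0 w
  | cons x l ih => simp [conjL, LTLP.toLTL, satInf, ih]

/-- **Proposition.** Every formula of the fragment `L_X` of `LTL(Prop)` has an
equivalent `LTL_P(Prop)`-formula over all actionless non-blocking Kripke
structures. -/
theorem LX_into_LTLP (P : Type) [Finite P] (hP : Nonempty P)
    (φ : LTL P) (hφ : NoFGU φ) :
    ∃ ψ : LTLP P, ∀ K : NBKripke P, KSat K φ ↔ KSat K ψ.toLTL := by
  classical
  obtain ⟨p0⟩ := hP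
  have : Fintype P := Fintype.ofFinite P
  obtain ⟨m, hm⟩ : ∃ m, depth φ = m + 1 :=
    ⟨depth φ - 1, by have := depth_pos φ; omega⟩
  haveI : Fintype (Fin (m + 1) → Set P) := Fintype.ofFinite _
  -- extension of a prefix by the empty letter
  set ext : (Fin (m + 1) → Set P) → (ℕ → Set P) :=
    fun u i => if h : i < m + 1 then u ⟨i, h⟩ else ∅ with hext
  set bad : Finset (Fin (m + 1) → Set P) :=
    Finset.univ.filter fun u => ¬ satInf φ (ext u) with hbad
  refine ⟨conjL (.ofProp (trueFm p0))
      (bad.toList.map fun u => clauseF m fun k => .not (charFm p0 (u k))), ?_⟩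
  have key : ∀ w : ℕ → Set P,
      satInf φ w ↔
        satInf (conjL (.ofProp (trueFm p0))
          (bad.toList.map fun u => clauseF m fun k => .not (charFm p0 (u k)))).toLTL w := by
    intro w
    rw [satInf_conjL]
    have hagree : ∀ u : Fin (m + 1) → Set P, (∀ k : Fin (m + 1), w k = u k) →
        (satInf φ w ↔ satInf φ (ext u)) := by
      intro u hu
      refine satInf_depend φ hφ w (ext u) fun k hk => ?_
      rw [hm] at hk
      simp only [hext, dif_pos hk]
      exact hu ⟨k, hk⟩
    constructor
    · intro hw x hx
      obtain ⟨u, hu, rfl⟩ := List.mem_map.1 hx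
      rw [hbad, Finset.mem_toList, Finset.mem_filter] at hu
      rw [satInf_clauseF]
      by_contra hno
      push_neg at hno
      have hall : ∀ k : Fin (m + 1), w k = u k := by
        intro k
        have := hno k
        simp only [PropFm.toLTL, satInf, not_not, satInf_charFm] at this
        simpa using this
      exact hu.2 ((hagree u hall).1 hw)
    · intro hall
      by_contra hw
      set u : Fin (m + 1) → Set P := fun k => w k with hu
      have hbadu : u ∈ bad := by
        rw [hbad, Finset.mem_filter]
        refine ⟨Finset.mem_univ _, fun hc => hw ?_⟩
        exact (hagree u fun k => rfl).2 hc
      have := hall (clauseF m fun k => .not (charFm p0 (u k)))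
        (List.mem_map.2 ⟨u, Finset.mem_toList.2 hbadu, rfl⟩)
      rw [satInf_clauseF] at this
      obtain ⟨k, hk⟩ := this
      simp only [PropFm.toLTL, satInf, satInf_charFm] at hk
      exact hk (by simp [hu])
  intro K
  constructor <;> intro h q hq ρ h0 hδ
  · exact (key _).1 (h q hq ρ h0 hδ)
  · exact (key _).2 (h q hq ρ h0 hδ)
end

section
/- Let L be any fragment of LTL_P(Prop) and let 𝒫, 𝒩 be finite sets of actionless non-blocking Kripke structures in T(Prop). If there is a (𝒫,𝒩)-separating L-formula, then there is one of size at most 2^{n+1}, where n := Σ_{K ∈ 𝒫∪𝒩} |Q_K|. -/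
open scoped Classical

/-- A fragment of `LTL_P(Prop)`: a subset of its operators (atomic propositions;
`¬`, `∧`, `∨` on the propositional sort; `∧`, `∨`, `X`, `G`, `F`, `U` on the
formula sort). -/
structure LTLPFragment (P : Type) where
  atoms : Set P
  pNot : Prop
  pAnd : Prop
  pOr : Prop
  fAnd : Prop
  fOr : Prop
  fNext : Prop
  fGlob : Prop
  fFut : Prop
  fUntil : Prop

/-- Membership of a propositional formula in a fragment. -/
def LTLPFragment.MemP {P : Type} (F : LTLPFragment P) : PropFm P → Prop
  | .atom p => p ∈ F.atoms
  | .not φ => F.pNot ∧ F.MemP φ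
  | .and φ ψ => F.pAnd ∧ F.MemP φ ∧ F.MemP ψ
  | .or φ ψ => F.pOr ∧ F.MemP φ ∧ F.MemP ψ

/-- Membership of an `LTL_P` formula in a fragment. -/
def LTLPFragment.MemF {P : Type} (F : LTLPFragment P) : LTLP P → Prop
  | .ofProp a => F.MemP a
  | .and φ ψ => F.fAnd ∧ F.MemF φ ∧ F.MemF ψ
  | .orP a φ => F.fOr ∧ F.MemP a ∧ F.MemF φ
  | .next φ => F.fNext ∧ F.MemF φ
  | .glob φ => F.fGlob ∧ F.MemF φ
  | .futP a => F.fFut ∧ F.MemP a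
  | .untlP φ a => F.fUntil ∧ F.MemF φ ∧ F.MemP a

/-- The set of subformulas of a propositional formula. -/
def PropSub {P : Type} : PropFm P → Set (PropFm P)
  | .atom p => {.atom p}
  | .not φ => insert (.not φ) (PropSub φ)
  | .and φ ψ => insert (.and φ ψ) (PropSub φ ∪ PropSub ψ)
  | .or φ ψ => insert (.or φ ψ) (PropSub φ ∪ PropSub ψ)

/-- The set of subformulas (of both sorts) of an `LTL_P` formula. -/
def LTLPSub {P : Type} : LTLP P → Set (PropFm P ⊕ LTLP P)
  | .ofProp a => insert (.inr (.ofProp a)) (Sum.inl '' PropSub a)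
  | .and φ ψ => insert (.inr (.and φ ψ)) (LTLPSub φ ∪ LTLPSub ψ)
  | .orP a φ => insert (.inr (.orP a φ)) (Sum.inl '' PropSub a ∪ LTLPSub φ)
  | .next φ => insert (.inr (.next φ)) (LTLPSub φ)
  | .glob φ => insert (.inr (.glob φ)) (LTLPSub φ)
  | .futP a => insert (.inr (.futP a)) (Sum.inl '' PropSub a)
  | .untlP φ a => insert (.inr (.untlP φ a)) (LTLPSub φ ∪ Sum.inl '' PropSub a)

/-- The (syntax-DAG) size of an `LTL_P` formula: its number of distinct
subformulas. -/
noncomputable def LTLPsz {P : Type} (φ : LTLP P) : ℕ := (LTLPSub φ).ncard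

/-!
Call two subformulas of the same sort equivalent when they define the same set of states in
every structure of the sample, where a state satisfies a formula if all paths from it do. For
`LTL_P` this set of states is determined by those of the immediate subformulas (for `φ U a`
because `a` is propositional), so replacing a subformula by an equivalent one changes neither
the semantics on the sample nor membership in a fragment. There are at most `2 ^ n` classes per
sort, so a formula with more than `2 ^ (n + 1)` distinct subformulas has two equivalent ones
`ψ₁ ≠ ψ₂`, with `ψ₁` not a subformula of `ψ₂`; replacing `ψ₁` by `ψ₂` merges them in the syntax
DAG and strictly lowers the size. Hence a separating formula of minimal size is small enough.
-/

theorem ncard_lt_of_subset_image_of_not_injOn {α β : Type*} {S : Set α} {T : Set β} {f : α → β}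
    (hS : S.Finite) (hT : T ⊆ f '' S) (hf : ¬ S.InjOn f) : T.ncard < S.ncard :=
  (Set.ncard_le_ncard hT (hS.image f)).trans_lt <|
    (Set.ncard_image_le hS).lt_of_ne fun h => hf (Set.injOn_of_ncard_image_eq h hS)

section

variable {P : Type} {F : LTLPFragment P}

def PropFm.eval : PropFm P → Set P → Prop
  | .atom p, s => p ∈ s
  | .not a, s => ¬ a.eval s
  | .and a b, s => a.eval s ∧ b.eval s
  | .or a b, s => a.eval s ∨ b.eval s

theorem PropFm.satInf_toLTL (a : PropFm P) (w : ℕ → Set P) :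
    satInf a.toLTL w ↔ a.eval (w 0) := by
  induction a <;> simp [PropFm.toLTL, satInf, eval, *]

namespace NBKripke

variable (K : NBKripke P)

def IsPath (ρ : ℕ → K.Q) : Prop := ∀ i, ρ (i + 1) ∈ K.δ (ρ i)

theorem exists_isPath (q : K.Q) : ∃ ρ, ρ 0 = q ∧ K.IsPath ρ := by
  let next r := (K.nonblocking r).choose
  refine ⟨fun n => next^[n] q, rfl, fun i => ?_⟩
  show next^[i + 1] q ∈ K.δ (next^[i] q)
  rw [Function.iterate_succ_apply']
  exact (K.nonblocking _).choose_spec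

variable {K}

theorem IsPath.shift {ρ : ℕ → K.Q} (hρ : K.IsPath ρ) (j : ℕ) : K.IsPath (fun i => ρ (i + j)) :=
  fun i => by simpa only [Nat.add_right_comm i 1 j] using hρ (i + j)

theorem IsPath.cons {q : K.Q} {σ : ℕ → K.Q} (hσ : K.IsPath σ) (h : σ 0 ∈ K.δ q) :
    K.IsPath (fun i => Nat.casesOn i q σ) := by
  rintro (_ | i)
  exacts [h, hσ i]

def splice (ρ : ℕ → K.Q) (m : ℕ) (σ : ℕ → K.Q) : ℕ → K.Q :=
  fun i => if i < m then ρ i else σ (i - m)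

theorem splice_add (ρ : ℕ → K.Q) (m : ℕ) (σ : ℕ → K.Q) (i : ℕ) :
    splice ρ m σ (i + m) = σ i := by
  simp [splice]

theorem splice_of_le {ρ σ : ℕ → K.Q} {m i : ℕ} (h : σ 0 = ρ m) (hi : i ≤ m) :
    splice ρ m σ i = ρ i := by
  rcases hi.lt_or_eq with hi | rfl
  · exact if_pos hi
  · simpa [splice] using h

theorem IsPath.splice {ρ σ : ℕ → K.Q} {m : ℕ} (hρ : K.IsPath ρ) (hσ : K.IsPath σ)
    (h : σ 0 = ρ m) : K.IsPath (splice ρ m σ) := by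
  intro i
  rcases lt_or_ge i m with hi | hi
  · rw [splice_of_le h hi, splice_of_le h hi.le]
    exact hρ i
  · obtain ⟨k, rfl⟩ := Nat.exists_eq_add_of_le' hi
    rw [Nat.add_right_comm, splice_add, splice_add]
    exact hσ k

end NBKripke

open NBKripke

def PropFm.states (K : NBKripke P) (a : PropFm P) : Set K.Q := {q | a.eval (K.π q)}

def LTLP.states (K : NBKripke P) (φ : LTLP P) : Set K.Q :=
  {q | ∀ ρ : ℕ → K.Q, ρ 0 = q → K.IsPath ρ → satInf φ.toLTL (fun i => K.π (ρ i))}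

theorem kSat_iff_subset_states (K : NBKripke P) (φ : LTLP P) :
    KSat K φ.toLTL ↔ K.I ⊆ φ.states K :=
  Iff.rfl

theorem kSat_congr {K : NBKripke P} {φ ψ : LTLP P} (h : φ.states K = ψ.states K) :
    KSat K φ.toLTL ↔ KSat K ψ.toLTL := by
  rw [kSat_iff_subset_states, kSat_iff_subset_states, h]

namespace LTLP

variable (K : NBKripke P)

theorem satInf_prop_iff (a : PropFm P) (ρ : ℕ → K.Q) :
    satInf a.toLTL (fun i => K.π (ρ i)) ↔ ρ 0 ∈ a.states K :=
  a.satInf_toLTL _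

theorem states_ofProp (a : PropFm P) : (ofProp a).states K = a.states K := by
  ext q
  obtain ⟨ρ, rfl, hρ⟩ := K.exists_isPath q
  refine ⟨fun h => ?_, fun h σ hσ _ => ?_⟩
  · exact (satInf_prop_iff K a ρ).1 (h ρ rfl hρ)
  · exact (satInf_prop_iff K a σ).2 (hσ ▸ h)

theorem states_and (φ ψ : LTLP P) : (and φ ψ).states K = φ.states K ∩ ψ.states K := by
  ext q
  simp only [states, toLTL, satInf, Set.mem_ofPred_eq, Set.mem_inter_iff]
  exact ⟨fun h => ⟨fun ρ h0 hρ => (h ρ h0 hρ).1, fun ρ h0 hρ => (h ρ h0 hρ).2⟩,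
    fun h ρ h0 hρ => ⟨h.1 ρ h0 hρ, h.2 ρ h0 hρ⟩⟩

theorem states_orP (a : PropFm P) (φ : LTLP P) :
    (orP a φ).states K = a.states K ∪ φ.states K := by
  ext q
  simp only [states, toLTL, satInf, satInf_prop_iff, Set.mem_ofPred_eq, Set.mem_union]
  constructor
  · intro h
    refine or_iff_not_imp_left.2 fun ha ρ h0 hρ => ?_
    exact (h ρ h0 hρ).resolve_left (h0 ▸ ha)
  · rintro (ha | hφ) ρ h0 hρ
    exacts [Or.inl (h0 ▸ ha), Or.inr (hφ ρ h0 hρ)]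

theorem states_next (φ : LTLP P) :
    (next φ).states K = {q | ∀ r ∈ K.δ q, r ∈ φ.states K} := by
  ext q
  simp only [states, toLTL, satInf, Set.mem_ofPred_eq]
  constructor
  · rintro h r hr σ rfl hσ
    exact h _ rfl (hσ.cons hr)
  · rintro h ρ rfl hρ
    exact h (ρ 1) (hρ 0) _ rfl (hρ.shift 1)

theorem states_glob (φ : LTLP P) :
    (glob φ).states K =
      {q | ∀ ρ : ℕ → K.Q, ρ 0 = q → K.IsPath ρ → ∀ j, ρ j ∈ φ.states K} := by
  ext q
  simp only [states, toLTL, satInf, Set.mem_ofPred_eq]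
  constructor
  · rintro h ρ h0 hρ j σ hσ0 hσ
    have := h _ ((splice_of_le hσ0 j.zero_le).trans h0) (hρ.splice hσ hσ0) j
    simpa only [splice_add] using this
  · rintro h ρ h0 hρ j
    exact h ρ h0 hρ j _ (by simp) (hρ.shift j)

theorem states_futP (a : PropFm P) :
    (futP a).states K =
      {q | ∀ ρ : ℕ → K.Q, ρ 0 = q → K.IsPath ρ → ∃ j, ρ j ∈ a.states K} := by
  ext q
  simp only [states, toLTL, satInf, Set.mem_ofPred_eq]
  refine forall₃_congr fun ρ _ _ => exists_congr fun j => ?_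
  simpa using satInf_prop_iff K a (fun i => ρ (i + j))

/-- On a path `ρ`, the first `a`-position `j` is a witness for every path that follows `ρ` up to
a position `k < j`; this is what makes `φ U a` compositional when `a` is propositional. -/
theorem states_untlP (φ : LTLP P) (a : PropFm P) :
    (untlP φ a).states K = {q | ∀ ρ : ℕ → K.Q, ρ 0 = q → K.IsPath ρ →
      ∃ j, ρ j ∈ a.states K ∧ ∀ k < j, ρ k ∈ φ.states K} := by
  ext q
  have hprop (ρ : ℕ → K.Q) (j : ℕ) :
      satInf a.toLTL (fun i => K.π (ρ (i + j))) ↔ ρ j ∈ a.states K := by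
    simpa using satInf_prop_iff K a (fun i => ρ (i + j))
  simp only [states, toLTL, satInf, hprop, Set.mem_ofPred_eq]
  constructor
  · intro h ρ h0 hρ
    have hex : ∃ j, ρ j ∈ a.states K := (h ρ h0 hρ).imp fun _ => And.left
    refine ⟨Nat.find hex, Nat.find_spec hex, fun k hk σ hσ0 hσ => ?_⟩
    obtain ⟨j, hj, hbefore⟩ :=
      h _ ((splice_of_le hσ0 k.zero_le).trans h0) (hρ.splice hσ hσ0)
    have hkj : k < j := by
      by_contra! hjk
      rw [splice_of_le hσ0 hjk] at hj
      have := Nat.find_le (h := hex) hj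
      omega
    simpa only [splice_add] using hbefore k hkj
  · intro h ρ h0 hρ
    obtain ⟨j, hj, hbefore⟩ := h ρ h0 hρ
    exact ⟨j, hj, fun k hk => hbefore k hk _ (by simp) (hρ.shift k)⟩

end LTLP

theorem self_mem_PropSub (a : PropFm P) : a ∈ PropSub a := by
  cases a <;> simp [PropSub]

theorem self_mem_LTLPSub (φ : LTLP P) : Sum.inr φ ∈ LTLPSub φ := by
  cases φ <;> simp [LTLPSub]

theorem PropSub_subset_of_mem {a b : PropFm P} (h : b ∈ PropSub a) : PropSub b ⊆ PropSub a := by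
  intro c hc
  induction a <;>
    simp only [PropSub, Set.mem_insert_iff, Set.mem_union, Set.mem_singleton_iff] at h ⊢ <;>
    aesop

theorem LTLPSub_subset_of_mem {φ ψ : LTLP P} (h : Sum.inr ψ ∈ LTLPSub φ) :
    LTLPSub ψ ⊆ LTLPSub φ := by
  intro c hc
  induction φ <;> simp only [LTLPSub, Set.mem_insert_iff, Set.mem_union, Set.mem_image] at h ⊢ <;>
    aesop

theorem image_PropSub_subset_of_mem {φ : LTLP P} {a : PropFm P} (h : Sum.inl a ∈ LTLPSub φ) :
    Sum.inl '' PropSub a ⊆ LTLPSub φ := by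
  rintro _ ⟨c, hc, rfl⟩
  have hc' : ∀ b, a ∈ PropSub b → c ∈ PropSub b := fun b hb => PropSub_subset_of_mem hb hc
  induction φ <;> simp only [LTLPSub, Set.mem_insert_iff, Set.mem_union, Set.mem_image] at h ⊢ <;>
    aesop

theorem eq_or_sizeOf_lt_of_mem_PropSub {a b : PropFm P} (h : b ∈ PropSub a) :
    b = a ∨ sizeOf b < sizeOf a := by
  induction a <;>
    simp only [PropSub, Set.mem_insert_iff, Set.mem_union, Set.mem_singleton_iff] at h <;> grind

theorem eq_or_sizeOf_lt_of_mem_LTLPSub {φ : LTLP P} {x : PropFm P ⊕ LTLP P}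
    (h : x ∈ LTLPSub φ) :
    x = Sum.inr φ ∨ sizeOf x < sizeOf (Sum.inr φ : PropFm P ⊕ LTLP P) := by
  have hP {a b : PropFm P} (h : b ∈ PropSub a) : sizeOf b ≤ sizeOf a :=
    (eq_or_sizeOf_lt_of_mem_PropSub h).elim (fun h => h ▸ le_rfl) le_of_lt
  induction φ <;> simp only [LTLPSub, Set.mem_insert_iff, Set.mem_union, Set.mem_image] at h <;>
    grind

theorem PropSub_antisymm {a b : PropFm P} (hab : a ∈ PropSub b) (hba : b ∈ PropSub a) : a = b := by
  have := eq_or_sizeOf_lt_of_mem_PropSub hab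
  have := eq_or_sizeOf_lt_of_mem_PropSub hba
  grind

theorem LTLPSub_antisymm {φ ψ : LTLP P} (hφψ : Sum.inr φ ∈ LTLPSub ψ)
    (hψφ : Sum.inr ψ ∈ LTLPSub φ) : φ = ψ := by
  have := eq_or_sizeOf_lt_of_mem_LTLPSub hφψ
  have := eq_or_sizeOf_lt_of_mem_LTLPSub hψφ
  grind

theorem PropSub_finite (a : PropFm P) : (PropSub a).Finite := by
  induction a <;> simp [PropSub, *]

theorem LTLPSub_finite (φ : LTLP P) : (LTLPSub φ).Finite := by
  induction φ <;> simp [LTLPSub, PropSub_finite, Set.Finite.image, *]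

namespace LTLPFragment

theorem memP_of_mem_PropSub {a b : PropFm P} (ha : F.MemP a) (h : b ∈ PropSub a) :
    F.MemP b := by
  induction a <;>
    simp only [PropSub, Set.mem_insert_iff, Set.mem_union, Set.mem_singleton_iff] at h <;>
    aesop (add norm MemP)

theorem mem_of_mem_LTLPSub {φ : LTLP P} {x : PropFm P ⊕ LTLP P} (hφ : F.MemF φ)
    (h : x ∈ LTLPSub φ) : Sum.elim F.MemP F.MemF x := by
  have hP := @memP_of_mem_PropSub P F
  induction φ <;> simp only [LTLPSub, Set.mem_insert_iff, Set.mem_union, Set.mem_image] at h <;>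
    aesop (add norm MemF)

end LTLPFragment

noncomputable def PropFm.replace (b a₁ a₂ : PropFm P) : PropFm P :=
  if b = a₁ then a₂ else
    match b with
    | .atom p => .atom p
    | .not c => .not (c.replace a₁ a₂)
    | .and c d => .and (c.replace a₁ a₂) (d.replace a₁ a₂)
    | .or c d => .or (c.replace a₁ a₂) (d.replace a₁ a₂)

noncomputable def LTLP.replace (φ ψ₁ ψ₂ : LTLP P) : LTLP P :=
  if φ = ψ₁ then ψ₂ else
    match φ with
    | .ofProp a => .ofProp a
    | .and α β => .and (α.replace ψ₁ ψ₂) (β.replace ψ₁ ψ₂)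
    | .orP a α => .orP a (α.replace ψ₁ ψ₂)
    | .next α => .next (α.replace ψ₁ ψ₂)
    | .glob α => .glob (α.replace ψ₁ ψ₂)
    | .futP a => .futP a
    | .untlP α a => .untlP (α.replace ψ₁ ψ₂) a

noncomputable def LTLP.replaceProp (a₁ a₂ : PropFm P) : LTLP P → LTLP P
  | .ofProp a => .ofProp (a.replace a₁ a₂)
  | .and α β => .and (α.replaceProp a₁ a₂) (β.replaceProp a₁ a₂)
  | .orP a α => .orP (a.replace a₁ a₂) (α.replaceProp a₁ a₂)
  | .next α => .next (α.replaceProp a₁ a₂)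
  | .glob α => .glob (α.replaceProp a₁ a₂)
  | .futP a => .futP (a.replace a₁ a₂)
  | .untlP α a => .untlP (α.replaceProp a₁ a₂) (a.replace a₁ a₂)

theorem PropFm.replace_self (a₁ a₂ : PropFm P) : a₁.replace a₁ a₂ = a₂ := by
  rw [replace.eq_def, if_pos rfl]

theorem LTLP.replace_self (ψ₁ ψ₂ : LTLP P) : ψ₁.replace ψ₁ ψ₂ = ψ₂ := by
  rw [replace.eq_def, if_pos rfl]

theorem PropFm.replace_of_not_mem {a₁ a₂ b : PropFm P} (h : a₁ ∉ PropSub b) :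
    b.replace a₁ a₂ = b := by
  induction b <;> rw [replace, if_neg (by rintro rfl; exact h (self_mem_PropSub _))] <;>
    simp_all [PropSub]

theorem LTLP.replace_of_not_mem {ψ₁ ψ₂ φ : LTLP P} (h : Sum.inr ψ₁ ∉ LTLPSub φ) :
    φ.replace ψ₁ ψ₂ = φ := by
  induction φ <;> rw [replace, if_neg (by rintro rfl; exact h (self_mem_LTLPSub _))] <;>
    simp_all [LTLPSub]

theorem LTLP.replaceProp_of_not_mem {a₁ a₂ : PropFm P} {φ : LTLP P}
    (h : Sum.inl a₁ ∉ LTLPSub φ) :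
    φ.replaceProp a₁ a₂ = φ := by
  induction φ <;> simp_all [LTLPSub, replaceProp, PropFm.replace_of_not_mem]

namespace PropFm

variable (K : NBKripke P)

theorem states_not (a : PropFm P) : (not a).states K = (a.states K)ᶜ := rfl

theorem states_and (a b : PropFm P) : (and a b).states K = a.states K ∩ b.states K := rfl

theorem states_or (a b : PropFm P) : (or a b).states K = a.states K ∪ b.states K := rfl

theorem states_replace {a₁ a₂ : PropFm P} (h : a₁.states K = a₂.states K) (b : PropFm P) :
    (b.replace a₁ a₂).states K = b.states K := by
  induction b <;> rw [replace] <;> split_ifs with hb <;>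
    simp_all only [states_not, states_and, states_or]

end PropFm

namespace LTLP

variable (K : NBKripke P)

theorem states_replace {ψ₁ ψ₂ : LTLP P} (h : ψ₁.states K = ψ₂.states K) (φ : LTLP P) :
    (φ.replace ψ₁ ψ₂).states K = φ.states K := by
  induction φ <;> rw [replace] <;> split_ifs with hφ <;>
    simp_all only [states_and, states_orP, states_next, states_glob, states_untlP]

theorem states_replaceProp {a₁ a₂ : PropFm P} (h : a₁.states K = a₂.states K) (φ : LTLP P) :
    (φ.replaceProp a₁ a₂).states K = φ.states K := by
  induction φ <;> simp only [replaceProp, states_ofProp, states_and, states_orP, states_next,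
    states_glob, states_futP, states_untlP, PropFm.states_replace K h, *]

end LTLP

theorem LTLPFragment.memP_replace {a₁ a₂ b : PropFm P} (h₂ : F.MemP a₂) (hb : F.MemP b) :
    F.MemP (b.replace a₁ a₂) := by
  induction b <;> rw [PropFm.replace] <;> split_ifs <;> simp_all [MemP]

theorem LTLPFragment.memF_replace {ψ₁ ψ₂ φ : LTLP P} (h₂ : F.MemF ψ₂) (hφ : F.MemF φ) :
    F.MemF (φ.replace ψ₁ ψ₂) := by
  induction φ <;> rw [LTLP.replace] <;> split_ifs <;> simp_all [MemF]

theorem LTLPFragment.memF_replaceProp {a₁ a₂ : PropFm P} {φ : LTLP P} (h₂ : F.MemP a₂)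
    (hφ : F.MemF φ) : F.MemF (φ.replaceProp a₁ a₂) := by
  induction φ <;> simp_all [MemF, LTLP.replaceProp, memP_replace]

theorem PropSub_replace_subset (b a₁ a₂ : PropFm P) :
    PropSub (b.replace a₁ a₂) ⊆ (·.replace a₁ a₂) '' PropSub b ∪ PropSub a₂ := by
  intro x hx
  induction b generalizing x <;> rw [PropFm.replace] at hx <;> split_ifs at hx with hb
  all_goals first
    | exact Or.inr hx
    | simp only [PropSub, Set.mem_insert_iff, Set.mem_union, Set.mem_image,
        Set.mem_singleton_iff] at hx ⊢
      grind [PropFm.replace]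

theorem LTLPSub_replace_subset (φ ψ₁ ψ₂ : LTLP P) :
    LTLPSub (φ.replace ψ₁ ψ₂) ⊆ Sum.map id (·.replace ψ₁ ψ₂) '' LTLPSub φ ∪ LTLPSub ψ₂ := by
  intro x hx
  induction φ generalizing x <;> rw [LTLP.replace] at hx <;> split_ifs at hx with hφ
  all_goals first
    | exact Or.inr hx
    | simp only [LTLPSub, Set.mem_insert_iff, Set.mem_union, Set.mem_image] at hx ⊢
      grind [LTLP.replace, -Sum.map_map]

theorem LTLPSub_replaceProp_subset (φ : LTLP P) (a₁ a₂ : PropFm P) :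
    LTLPSub (φ.replaceProp a₁ a₂) ⊆
      Sum.map (·.replace a₁ a₂) (·.replaceProp a₁ a₂) '' LTLPSub φ ∪ Sum.inl '' PropSub a₂ := by
  have hP := PropSub_replace_subset (P := P) (a₁ := a₁) (a₂ := a₂)
  intro x hx
  induction φ generalizing x <;>
    simp only [LTLP.replaceProp, LTLPSub, Set.subset_def, Set.mem_insert_iff, Set.mem_union,
      Set.mem_image, Sum.exists, Sum.map_inl, Sum.map_inr] at * <;>
    grind [LTLP.replaceProp]

theorem LTLPsz_replace_lt {φ ψ₁ ψ₂ : LTLP P} (h₁ : Sum.inr ψ₁ ∈ LTLPSub φ)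
    (h₂ : Sum.inr ψ₂ ∈ LTLPSub φ) (hne : ψ₁ ≠ ψ₂) (hfree : Sum.inr ψ₁ ∉ LTLPSub ψ₂) :
    LTLPsz (φ.replace ψ₁ ψ₂) < LTLPsz φ := by
  let g : PropFm P ⊕ LTLP P → PropFm P ⊕ LTLP P := Sum.map id (·.replace ψ₁ ψ₂)
  have hfix : LTLPSub ψ₂ ⊆ g '' LTLPSub φ := by
    intro x hx
    refine ⟨x, LTLPSub_subset_of_mem h₂ hx, ?_⟩
    rcases x with b | χ
    · rfl
    · simp [g, LTLP.replace_of_not_mem fun h => hfree (LTLPSub_subset_of_mem hx h)]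
  refine ncard_lt_of_subset_image_of_not_injOn (LTLPSub_finite φ)
    ((LTLPSub_replace_subset φ ψ₁ ψ₂).trans (Set.union_subset subset_rfl hfix))
    fun hinj => hne (Sum.inr_injective (hinj h₁ h₂ ?_))
  simp [LTLP.replace_self, LTLP.replace_of_not_mem hfree]

theorem LTLPsz_replaceProp_lt {φ : LTLP P} {a₁ a₂ : PropFm P} (h₁ : Sum.inl a₁ ∈ LTLPSub φ)
    (h₂ : Sum.inl a₂ ∈ LTLPSub φ) (hne : a₁ ≠ a₂) (hfree : a₁ ∉ PropSub a₂) :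
    LTLPsz (φ.replaceProp a₁ a₂) < LTLPsz φ := by
  let g : PropFm P ⊕ LTLP P → PropFm P ⊕ LTLP P :=
    Sum.map (·.replace a₁ a₂) (·.replaceProp a₁ a₂)
  have hfix : Sum.inl '' PropSub a₂ ⊆ g '' LTLPSub φ := by
    rintro _ ⟨b, hb, rfl⟩
    refine ⟨Sum.inl b, image_PropSub_subset_of_mem h₂ ⟨b, hb, rfl⟩, ?_⟩
    simp [g, PropFm.replace_of_not_mem fun h => hfree (PropSub_subset_of_mem hb h)]
  refine ncard_lt_of_subset_image_of_not_injOn (LTLPSub_finite φ)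
    ((LTLPSub_replaceProp_subset φ a₁ a₂).trans (Set.union_subset subset_rfl hfix))
    fun hinj => hne (Sum.inl_injective (hinj h₁ h₂ ?_))
  simp [PropFm.replace_self, PropFm.replace_of_not_mem hfree]

theorem exists_smaller_of_states_eq (S : Finset (NBKripke P)) {φ ψ₁ ψ₂ : LTLP P}
    (hφ : F.MemF φ) (h₁ : Sum.inr ψ₁ ∈ LTLPSub φ) (h₂ : Sum.inr ψ₂ ∈ LTLPSub φ) (hne : ψ₁ ≠ ψ₂)
    (hstates : ∀ K ∈ S, ψ₁.states K = ψ₂.states K) :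
    ∃ φ' : LTLP P, LTLPsz φ' < LTLPsz φ ∧ F.MemF φ' ∧ ∀ K ∈ S, φ'.states K = φ.states K := by
  wlog hfree : Sum.inr ψ₁ ∉ LTLPSub ψ₂ generalizing ψ₁ ψ₂
  · refine this h₂ h₁ hne.symm (fun K hK => (hstates K hK).symm) fun h => ?_
    exact hne (LTLPSub_antisymm (not_not.1 hfree) h)
  exact ⟨φ.replace ψ₁ ψ₂, LTLPsz_replace_lt h₁ h₂ hne hfree,
    LTLPFragment.memF_replace (LTLPFragment.mem_of_mem_LTLPSub hφ h₂) hφ,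
    fun K hK => LTLP.states_replace K (hstates K hK) φ⟩

theorem exists_smaller_of_propStates_eq (S : Finset (NBKripke P)) {φ : LTLP P}
    {a₁ a₂ : PropFm P} (hφ : F.MemF φ) (h₁ : Sum.inl a₁ ∈ LTLPSub φ)
    (h₂ : Sum.inl a₂ ∈ LTLPSub φ) (hne : a₁ ≠ a₂)
    (hstates : ∀ K ∈ S, a₁.states K = a₂.states K) :
    ∃ φ' : LTLP P, LTLPsz φ' < LTLPsz φ ∧ F.MemF φ' ∧ ∀ K ∈ S, φ'.states K = φ.states K := by
  wlog hfree : a₁ ∉ PropSub a₂ generalizing a₁ a₂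
  · refine this h₂ h₁ hne.symm (fun K hK => (hstates K hK).symm) fun h => ?_
    exact hne (PropSub_antisymm (not_not.1 hfree) h)
  exact ⟨φ.replaceProp a₁ a₂, LTLPsz_replaceProp_lt h₁ h₂ hne hfree,
    LTLPFragment.memF_replaceProp (LTLPFragment.mem_of_mem_LTLPSub hφ h₂) hφ,
    fun K hK => LTLP.states_replaceProp K (hstates K hK) φ⟩

/-- Tagged with the sort, so that formulas with equal values have the same sort. -/
def statesOnSample (S : Finset (NBKripke P)) :
    PropFm P ⊕ LTLP P → ((K : S) → Set K.1.Q) ⊕ ((K : S) → Set K.1.Q) :=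
  Sum.map (fun a K => a.states K.1) (fun φ K => φ.states K.1)

theorem card_statesOnSample_codomain (S : Finset (NBKripke P)) :
    Nat.card (((K : S) → Set K.1.Q) ⊕ ((K : S) → Set K.1.Q)) =
      2 ^ ((∑ K ∈ S, Fintype.card K.Q) + 1) := by
  rw [Nat.card_sum, Nat.card_pi]
  simp only [Nat.card_eq_fintype_card, Fintype.card_set]
  rw [Finset.prod_pow_eq_pow_sum, Finset.sum_coe_sort S (fun K => Fintype.card K.Q), pow_succ]
  ring

theorem exists_smaller_of_two_pow_lt (S : Finset (NBKripke P)) {φ : LTLP P} (hφ : F.MemF φ)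
    (hsz : 2 ^ ((∑ K ∈ S, Fintype.card K.Q) + 1) < LTLPsz φ) :
    ∃ φ' : LTLP P, LTLPsz φ' < LTLPsz φ ∧ F.MemF φ' ∧ ∀ K ∈ S, φ'.states K = φ.states K := by
  obtain ⟨x, hx, y, hy, hne, hxy⟩ := Set.exists_ne_map_eq_of_ncard_lt_of_maps_to
    (t := Set.univ) (f := statesOnSample S)
    (by rwa [Set.ncard_univ, card_statesOnSample_codomain]) fun _ _ => Set.mem_univ _
  rcases x with a₁ | ψ₁ <;> rcases y with a₂ | ψ₂ <;>
    simp only [statesOnSample, Sum.map_inl, Sum.map_inr, Sum.inl.injEq, Sum.inr.injEq,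
      reduceCtorEq, funext_iff, Subtype.forall, ne_eq] at hxy hne
  · exact exists_smaller_of_propStates_eq S hφ hx hy hne hxy
  · exact exists_smaller_of_states_eq S hφ hx hy hne hxy

end

theorem ltlp_separating_size_general (P : Type)
    (F : LTLPFragment P) (Pos Neg : Finset (NBKripke P)) :
    (∃ φ : LTLP P, F.MemF φ ∧
        (∀ K ∈ Pos, KSat K φ.toLTL) ∧ (∀ K ∈ Neg, ¬ KSat K φ.toLTL)) →
    ∃ φ : LTLP P, F.MemF φ ∧
        (∀ K ∈ Pos, KSat K φ.toLTL) ∧ (∀ K ∈ Neg, ¬ KSat K φ.toLTL) ∧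
        LTLPsz φ ≤ 2 ^ ((∑ K ∈ Pos ∪ Neg, Fintype.card K.Q) + 1) := by
  intro hsep
  obtain ⟨φ, ⟨hF, hpos, hneg⟩, hmin⟩ := (measure (LTLPsz (P := P))).wf.has_min _ hsep
  refine ⟨φ, hF, hpos, hneg, not_lt.1 fun hlt => ?_⟩
  obtain ⟨φ', hlt', hF', hstates⟩ := exists_smaller_of_two_pow_lt (Pos ∪ Neg) hF hlt
  refine hmin φ' ⟨hF', fun K hK => ?_, fun K hK => ?_⟩ hlt'
  · exact (kSat_congr (hstates K (Finset.mem_union_left _ hK))).2 (hpos K hK)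
  · exact (kSat_congr (hstates K (Finset.mem_union_right _ hK))).not.2 (hneg K hK)

/-- **Corollary.** For any fragment of `LTL_P(Prop)` and any sample `(Pos, Neg)` of
actionless non-blocking Kripke structures: if some fragment formula separates the
sample, then one of size at most `2^(n+1)` does, where `n` is the total number of
states of the sample. -/
theorem ltlp_separating_size (P : Type) [Finite P] (hP : Nonempty P)
    (F : LTLPFragment P) (Pos Neg : Finset (NBKripke P)) :
    (∃ φ : LTLP P, F.MemF φ ∧
        (∀ K ∈ Pos, KSat K φ.toLTL) ∧ (∀ K ∈ Neg, ¬ KSat K φ.toLTL)) →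
    ∃ φ : LTLP P, F.MemF φ ∧
        (∀ K ∈ Pos, KSat K φ.toLTL) ∧ (∀ K ∈ Neg, ¬ KSat K φ.toLTL) ∧
        LTLPsz φ ≤ 2 ^ ((∑ K ∈ Pos ∪ Neg, Fintype.card K.Q) + 1) :=
  ltlp_separating_size_general P F Pos Neg
end
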